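/- Suppose Y = θ + ε where ε ~ N(0, σ²). Then for the soft-threshold estimator θ̂ = η_{σt}(Y) with threshold level σt, the risk satisfies E[(θ̂ - θ)²] ≤ σ²(1 + t²) for every θ ∈ ℝ; moreover at θ = 0, E[η_{σt}(Y)²] ≤ 2σ²(1 + t²)·exp(-t²/2). -/

import Mathlib

open MeasureTheory ProbabilityTheory

/-- Soft-thresholding shrinker `η_s(x) = (|x| - s)₊ · sgn(x)`. -/
noncomputable def softThresh (s x : ℝ) : ℝ := max (|x| - s) 0 * Real.sign x

/-!
Write `η_s(y) = y - c(y)`, where `c` clips to `[-s, s]`. Since `c` is monotone and bounded by `s`,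
expanding the square gives `(η_s(y) - θ)² ≤ (y - θ)² + s² - 2 c(θ) (y - θ)`, a bound that is
linear in `y` apart from `(y - θ)²`; at the mean `θ` its expectation is `σ² + s²`.

At `θ = 0`, for `y ≥ s ≥ 0` we have `y² ≥ (y - s)² + s²`, so the density satisfies
`φ(y) ≤ exp (-s² / 2σ²) φ(y - s)`. Both tails `|y| > s` of `E η_s(Y)²` therefore lose this factor
against the density shifted towards the origin by `s`, and the two shifted tails together
make up the second moment `E Y² = σ²`.
-/

open Real
open scoped NNReal

section SoftThresh

variable {s : ℝ}

theorem softThresh_eq_sub_max_min (hs : 0 ≤ s) (x : ℝ) :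
    softThresh s x = x - max (-s) (min s x) := by
  unfold softThresh
  rcases lt_trichotomy x 0 with hx | rfl | hx
  · rw [Real.sign_of_neg hx, abs_of_neg hx]
    rcases le_or_gt (-s) x with h | h
    · simp [max_eq_right (by linarith : -x - s ≤ 0), min_eq_right (by linarith : x ≤ s), h]
    · simp [max_eq_left (by linarith : 0 ≤ -x - s), min_eq_right (by linarith : x ≤ s),
        max_eq_left h.le]
      ring
  · simp [hs]
  · rw [Real.sign_of_pos hx, abs_of_pos hx]
    rcases le_or_gt x s with h | h
    · simp [h, (by linarith : -s ≤ x)]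
    · simp [max_eq_left (by linarith : 0 ≤ x - s), min_eq_left h.le, (by linarith : -s ≤ s)]

theorem sq_softThresh (hs : 0 ≤ s) (x : ℝ) :
    softThresh s x ^ 2 = max (x - s) 0 ^ 2 + max (-x - s) 0 ^ 2 := by
  unfold softThresh
  rcases lt_trichotomy x 0 with hx | rfl | hx
  · rw [Real.sign_of_neg hx, abs_of_neg hx, max_eq_right (by linarith : x - s ≤ 0)]
    ring
  · simp [hs]
  · rw [Real.sign_of_pos hx, abs_of_pos hx, max_eq_right (by linarith : -x - s ≤ 0)]
    ring

theorem sq_softThresh_sub_le (hs : 0 ≤ s) (y θ : ℝ) :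
    (softThresh s y - θ) ^ 2 ≤ (y - θ) ^ 2 + s ^ 2 - 2 * (θ - softThresh s θ) * (y - θ) := by
  set c : ℝ → ℝ := fun x => max (-s) (min s x)
  have hc : ∀ x, softThresh s x = x - c x := softThresh_eq_sub_max_min hs
  have hc_mono : Monotone c := fun x x' h => max_le_max le_rfl (min_le_min_left s h)
  have hc_sq : c y ^ 2 ≤ s ^ 2 :=
    sq_le_sq' (le_max_left _ _) (max_le (by linarith) (min_le_left _ _))
  have hc_corr : 0 ≤ (y - θ) * (c y - c θ) := by
    rcases le_total θ y with h | h
    · exact mul_nonneg (sub_nonneg.2 h) (sub_nonneg.2 (hc_mono h))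
    · exact mul_nonneg_of_nonpos_of_nonpos (sub_nonpos.2 h) (sub_nonpos.2 (hc_mono h))
  rw [hc, hc]
  nlinarith

end SoftThresh

theorem integral_sq_softThresh_sub_integral_le {s : ℝ} (hs : 0 ≤ s) {μ : Measure ℝ}
    [IsProbabilityMeasure μ] (hμ : MemLp (fun x => x) 2 μ) :
    ∫ y, (softThresh s y - ∫ x, x ∂μ) ^ 2 ∂μ ≤ Var[fun x => x; μ] + s ^ 2 := by
  set θ := ∫ x, x ∂μ
  set a := θ - softThresh s θ
  have h_dev : MemLp (fun y => y - θ) 2 μ := hμ.sub (memLp_const θ)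
  have h_lin : Integrable (fun y => 2 * a * (y - θ)) μ :=
    (h_dev.integrable one_le_two).const_mul _
  have h_quad : Integrable (fun y => (y - θ) ^ 2 + s ^ 2) μ :=
    h_dev.integrable_sq.add (integrable_const _)
  have h_mean : ∫ y, (y - θ) ∂μ = 0 := by
    rw [integral_sub (hμ.integrable one_le_two) (integrable_const θ)]
    simp [θ]
  calc ∫ y, (softThresh s y - θ) ^ 2 ∂μ
      ≤ ∫ y, ((y - θ) ^ 2 + s ^ 2 - 2 * a * (y - θ)) ∂μ :=
        integral_mono_of_nonneg (ae_of_all _ fun _ => sq_nonneg _) (h_quad.sub h_lin)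
          (ae_of_all _ fun y => sq_softThresh_sub_le hs y θ)
    _ = Var[fun x => x; μ] + s ^ 2 := by
      rw [integral_sub h_quad h_lin, integral_add h_dev.integrable_sq (integrable_const _),
        integral_const_mul, h_mean, variance_eq_integral aemeasurable_id']
      simp [θ]

namespace ProbabilityTheory

variable {v : ℝ≥0}

theorem integrable_gaussianPDFReal_mul_iff {m : ℝ} (hv : v ≠ 0) {f : ℝ → ℝ} :
    Integrable (fun x => gaussianPDFReal m v x * f x) ↔ Integrable f (gaussianReal m v) := by
  rw [gaussianReal_of_var_ne_zero m hv,
    integrable_withDensity_iff_integrable_smul' (measurable_gaussianPDF m v)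
      (ae_of_all _ fun _ => gaussianPDF_lt_top)]
  simp only [toReal_gaussianPDF, smul_eq_mul]

theorem gaussianPDFReal_zero_neg (x : ℝ) : gaussianPDFReal 0 v (-x) = gaussianPDFReal 0 v x := by
  simp [gaussianPDFReal]

theorem integral_sq_gaussianReal_zero : ∫ x, x ^ 2 ∂gaussianReal 0 v = v := by
  simpa [variance_eq_integral aemeasurable_id', integral_id_gaussianReal] using
    variance_fun_id_gaussianReal (μ := 0) (v := v)

theorem gaussianPDFReal_le_exp_mul_gaussianPDFReal_sub {s y : ℝ} (hs : 0 ≤ s) (hy : s ≤ y) :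
    gaussianPDFReal 0 v y ≤ exp (-s ^ 2 / (2 * v)) * gaussianPDFReal 0 v (y - s) := by
  simp only [gaussianPDFReal, sub_zero]
  rw [mul_left_comm, ← exp_add, ← add_div]
  gcongr
  nlinarith

theorem sq_max_sub_mul_gaussianPDFReal_le {s : ℝ} (hs : 0 ≤ s) (y : ℝ) :
    max (y - s) 0 ^ 2 * gaussianPDFReal 0 v y ≤
      exp (-s ^ 2 / (2 * v)) * (max (y - s) 0 ^ 2 * gaussianPDFReal 0 v (y - s)) := by
  rcases le_total y s with hy | hy
  · simp [max_eq_right (sub_nonpos.2 hy)]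
  · rw [mul_left_comm]
    exact mul_le_mul_of_nonneg_left (gaussianPDFReal_le_exp_mul_gaussianPDFReal_sub hs hy)
      (sq_nonneg _)

end ProbabilityTheory

theorem integral_sq_softThresh_gaussianReal_le {v : ℝ≥0} (hv : v ≠ 0) {s : ℝ} (hs : 0 ≤ s) :
    ∫ y, softThresh s y ^ 2 ∂gaussianReal 0 v ≤ exp (-s ^ 2 / (2 * v)) * v := by
  set F : ℝ → ℝ := fun u => max u 0 ^ 2 * gaussianPDFReal 0 v u
  have hF_nonneg (u : ℝ) : 0 ≤ F u := mul_nonneg (sq_nonneg _) (gaussianPDFReal_nonneg _ _ _)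
  have hF_moment (u : ℝ) : F u + F (-u) = gaussianPDFReal 0 v u * u ^ 2 := by
    simp only [F, gaussianPDFReal_zero_neg]
    rcases le_total u 0 with hu | hu <;> simp [hu] <;> ring
  have h_moment_int : Integrable (fun u => gaussianPDFReal 0 v u * u ^ 2) :=
    (integrable_gaussianPDFReal_mul_iff hv).2 ((memLp_id_gaussianReal 2).integrable_sq)
  have hF_int : Integrable F := by
    refine h_moment_int.mono' (by fun_prop) (ae_of_all _ fun u => ?_)
    rw [Real.norm_of_nonneg (hF_nonneg u), ← hF_moment u]
    exact le_add_of_nonneg_right (hF_nonneg _)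
  have h_tails_int : Integrable (fun y => F (y - s) + F (-y - s)) :=
    (hF_int.comp_sub_right s).add (hF_int.comp_sub_right s).comp_neg
  have h_pointwise (y : ℝ) :
      gaussianPDFReal 0 v y * softThresh s y ^ 2 ≤
        exp (-s ^ 2 / (2 * v)) * (F (y - s) + F (-y - s)) := by
    have h_neg := sq_max_sub_mul_gaussianPDFReal_le (v := v) hs (-y)
    rw [gaussianPDFReal_zero_neg] at h_neg
    rw [sq_softThresh hs, mul_comm, add_mul, mul_add]
    exact add_le_add (sq_max_sub_mul_gaussianPDFReal_le hs y) h_neg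
  have h_shift : ∫ y, (F (y - s) + F (-y - s)) = v := by
    rw [integral_add (hF_int.comp_sub_right s) (hF_int.comp_sub_right s).comp_neg,
      integral_neg_eq_self (fun y => F (y - s)), integral_sub_right_eq_self F]
    nth_rw 2 [← integral_neg_eq_self F volume]
    simp only [← integral_add hF_int hF_int.comp_neg, hF_moment]
    exact (integral_gaussianReal_eq_integral_smul hv).symm.trans integral_sq_gaussianReal_zero
  calc ∫ y, softThresh s y ^ 2 ∂gaussianReal 0 v
      = ∫ y, gaussianPDFReal 0 v y * softThresh s y ^ 2 :=
        integral_gaussianReal_eq_integral_smul hv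
    _ ≤ ∫ y, exp (-s ^ 2 / (2 * v)) * (F (y - s) + F (-y - s)) :=
        integral_mono_of_nonneg
          (ae_of_all _ fun y => mul_nonneg (gaussianPDFReal_nonneg _ _ _) (sq_nonneg _))
          (h_tails_int.const_mul _)
          (ae_of_all _ h_pointwise)
    _ = exp (-s ^ 2 / (2 * v)) * v := by rw [integral_const_mul, h_shift]

theorem soft_threshold_gaussian_risk (σ t : ℝ) (hσ : 0 < σ) (ht : 0 ≤ t) :
    (∀ θ : ℝ,
      (∫ y, (softThresh (σ * t) y - θ) ^ 2 ∂(gaussianReal θ (Real.toNNReal (σ ^ 2)))) ≤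
        σ ^ 2 * (1 + t ^ 2)) ∧
    (∫ y, (softThresh (σ * t) y) ^ 2 ∂(gaussianReal 0 (Real.toNNReal (σ ^ 2)))) ≤
      2 * σ ^ 2 * (1 + t ^ 2) * Real.exp (-t ^ 2 / 2) := by
  have hs : 0 ≤ σ * t := mul_nonneg hσ.le ht
  have hv : ((σ ^ 2).toNNReal : ℝ) = σ ^ 2 := Real.coe_toNNReal _ (sq_nonneg σ)
  constructor
  · intro θ
    have h := integral_sq_softThresh_sub_integral_le hs
      (memLp_id_gaussianReal (μ := θ) (v := (σ ^ 2).toNNReal) 2)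
    rw [integral_id_gaussianReal, variance_fun_id_gaussianReal, hv] at h
    linarith
  · have h := integral_sq_softThresh_gaussianReal_le (v := (σ ^ 2).toNNReal)
      (by simpa using hσ.ne') hs
    have h_exp : -(σ * t) ^ 2 / (2 * σ ^ 2) = -t ^ 2 / 2 := by field_simp
    rw [hv, h_exp] at h
    nlinarith [exp_pos (-t ^ 2 / 2), sq_nonneg t, sq_nonneg σ]
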